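/- arXiv:2212.07670 — 2 statements merged into one kernel-verified Lean document; each statement's English description precedes it below -/
import Mathlib

section
/- Let T and S be trees and μ a model of T in S (i.e., a witness that T is a minor of S). If v is a vertex of T with degree greater than 2, then the branch set μ(v) contains a vertex of S of degree greater than 2. -/
/-!
Pick three neighbours `uᵢ` of `v` and edges `aᵢbᵢ` of `S` with `aᵢ ∈ μ v` and `bᵢ ∈ μ uᵢ`; the
`bᵢ` are distinct and lie outside `μ v`. Joining the `aᵢ` by paths inside `μ v` and adding the
three edges gives a finite subtree of `S` in which the `bᵢ` are leaves. A finite tree of maximum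
degree 2 has at most two leaves, so some vertex of the subtree, necessarily in `μ v`, has degree
greater than 2 already in the subtree.
-/

open SimpleGraph

/-- A ray in a graph: a one-way infinite path. -/
def IsRay {V : Type*} (G : SimpleGraph V) (f : ℕ → V) : Prop :=
  Function.Injective f ∧ ∀ n, G.Adj (f n) (f (n + 1))

/-- The degree of a vertex, as an extended natural number. -/
noncomputable def eDeg {V : Type*} (G : SimpleGraph V) (v : V) : ℕ∞ :=
  (G.neighborSet v).encard

/-- A ray is eventually bare if from some index on all its vertices have degree 2. -/
def EventuallyBare {V : Type*} (G : SimpleGraph V) (f : ℕ → V) : Prop :=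
  ∃ M : ℕ, ∀ n ≥ M, eDeg G (f n) = 2

/-- A tree is small if every ray in it is eventually bare. -/
def IsSmall {V : Type*} (G : SimpleGraph V) : Prop :=
  ∀ f : ℕ → V, IsRay G f → EventuallyBare G f

/-- A minor model of `T` in `S`: pairwise disjoint nonempty connected branch sets,
every edge of `T` witnessed by an edge of `S` between the corresponding branch sets. -/
structure IsModel {V W : Type*} (T : SimpleGraph V) (S : SimpleGraph W)
    (μ : V → Set W) : Prop where
  nonempty : ∀ v, (μ v).Nonempty
  connected : ∀ v, (S.induce (μ v)).Connected
  disjoint : ∀ v w, v ≠ w → Disjoint (μ v) (μ w)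
  edge : ∀ v w, T.Adj v w → ∃ a ∈ μ v, ∃ b ∈ μ w, S.Adj a b

/-- `T` is a minor of `S`. -/
def IsMinorOf {V W : Type*} (T : SimpleGraph V) (S : SimpleGraph W) : Prop :=
  ∃ μ : V → Set W, IsModel T S μ

/-- Tree order relative to a root: `v` lies on the (unique) path from `r` to `w`. -/
def treeLE {V : Type*} (G : SimpleGraph V) (r v w : V) : Prop :=
  v = w ∨ ∃ p : G.Walk r w, p.IsPath ∧ v ∈ p.support

/-- Closure of a vertex set: the set together with all vertices on paths joining its members. -/
def treeClosure {V : Type*} (G : SimpleGraph V) (A : Set V) : Set V :=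
  A ∪ {x | ∃ a ∈ A, ∃ b ∈ A, ∃ p : G.Walk a b, p.IsPath ∧ x ∈ p.support}

lemma IsModel.eq_of_mem {V W : Type*} {T : SimpleGraph V} {S : SimpleGraph W} {μ : V → Set W}
    (hμ : IsModel T S μ) {u v : V} {w : W} (hu : w ∈ μ u) (hv : w ∈ μ v) : u = v := by
  by_contra h
  exact Set.disjoint_left.1 (hμ.disjoint u v h) hu hv

namespace SimpleGraph

variable {V : Type*} {G : SimpleGraph V}

lemma eDeg_eq_degree (v : V) [Fintype (G.neighborSet v)] : eDeg G v = G.degree v := by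
  rw [eDeg, Set.encard_eq_coe_toFinset_card, ← neighborFinset_def, card_neighborFinset_eq_degree]

-- `∑ deg = 2 (n - 1)`, while the vertices of `L` contribute at most `1` each and all others `2`.
theorem IsTree.encard_le_two_of_eDeg_le_one [Finite V] (hG : G.IsTree)
    (hdeg : ∀ x, eDeg G x ≤ 2) {L : Set V} (hL : ∀ x ∈ L, eDeg G x ≤ 1) : L.encard ≤ 2 := by
  classical
  have := Fintype.ofFinite V
  have hL : ∀ x ∈ L.toFinset, G.degree x ≤ 1 := fun x hx ↦ by
    exact_mod_cast (eDeg_eq_degree x).symm.trans_le (hL x (Set.mem_toFinset.1 hx))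
  have hdeg : ∀ x ∈ Finset.univ \ L.toFinset, G.degree x ≤ 2 := fun x _ ↦ by
    exact_mod_cast (eDeg_eq_degree x).symm.trans_le (hdeg x)
  have hsum : ∑ x, G.degree x + 2 = 2 * Fintype.card V := by
    rw [sum_degrees_eq_twice_card_edges, ← hG.card_edgeFinset]; ring
  have hsumL := Finset.sum_le_card_nsmul _ _ _ hL
  have hsumR := Finset.sum_le_card_nsmul _ _ _ hdeg
  have hsplit := Finset.sum_sdiff (Finset.subset_univ L.toFinset) (f := fun x ↦ G.degree x)
  have hcard := Finset.card_sdiff_add_card_eq_card (Finset.subset_univ L.toFinset)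
  rw [Set.encard_eq_coe_toFinset_card]
  simp only [smul_eq_mul, Finset.card_univ] at *
  norm_cast
  omega

namespace Subgraph

lemma eDeg_coe_le (H : G.Subgraph) (v : H.verts) : eDeg H.coe v ≤ eDeg G v := by
  calc eDeg H.coe v = (Subtype.val '' H.coe.neighborSet v).encard :=
        (Subtype.val_injective.encard_image _).symm
    _ ≤ eDeg G v := Set.encard_mono <| by rintro _ ⟨w, hw, rfl⟩; exact H.adj_sub hw

lemma connected_iSup {ι : Sort*} [Nonempty ι] {H : ι → G.Subgraph} {u : V}
    (hu : ∀ i, u ∈ (H i).verts) (hH : ∀ i, (H i).Connected) : (⨆ i, H i).Connected := by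
  have hsub : ∀ i, (H i).verts ⊆ (⨆ i, H i).verts := fun i ↦ (le_iSup H i).1
  rw [Subgraph.connected_iff', connected_iff_exists_forall_reachable]
  refine ⟨⟨u, hsub (Classical.arbitrary ι) (hu _)⟩, ?_⟩
  rintro ⟨v, hv⟩
  obtain ⟨i, hi⟩ := Set.mem_iUnion.1 (verts_iSup ▸ hv)
  exact ((hH i).preconnected ⟨u, hu i⟩ ⟨v, hi⟩).map (inclusion (le_iSup H i))

end Subgraph

lemma exists_walk_toSubgraph_le_induce {s : Set V} (hs : (G.induce s).Preconnected) {u v : V}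
    (hu : u ∈ s) (hv : v ∈ s) : ∃ p : G.Walk u v, p.toSubgraph ≤ (⊤ : G.Subgraph).induce s :=
  (Subgraph.preconnected_iff_forall_exists_walk_subgraph _).1 (preconnected_induce_iff.1 hs) hu hv

section Exits

variable {W ι : Type*} {S : SimpleGraph W} {X : Set W} {a b : ι → W}

-- Paths inside `X` from `a i₀` to each `a i`, together with the pendant edges `a i b i`.
lemma exists_finite_connected_subgraph_of_exits [Finite ι] [Nonempty ι]
    (hX : (S.induce X).Preconnected) (ha : ∀ i, a i ∈ X) (hb : ∀ i, b i ∉ X)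
    (hb_inj : Function.Injective b) (hab : ∀ i, S.Adj (a i) (b i)) :
    ∃ H : S.Subgraph, H.Connected ∧ H.verts.Finite ∧ H.verts ⊆ X ∪ Set.range b ∧
      (∀ i, b i ∈ H.verts) ∧ ∀ i x, H.Adj (b i) x → x = a i := by
  obtain ⟨i₀⟩ := ‹Nonempty ι›
  choose p hp using fun i ↦ exists_walk_toSubgraph_le_induce hX (ha i₀) (ha i)
  have hp_verts : ∀ i, (p i).toSubgraph.verts ⊆ X := fun i ↦ (hp i).1
  refine ⟨⨆ i, (p i).toSubgraph ⊔ S.subgraphOfAdj (hab i), ?_, ?_, ?_, ?_, ?_⟩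
  · refine Subgraph.connected_iSup (u := a i₀) (fun i ↦ .inl (p i).start_mem_verts_toSubgraph)
      fun i ↦ Subgraph.connected_sup (p i).toSubgraph_connected.preconnected
        (Subgraph.subgraphOfAdj_connected _).preconnected
        ⟨a i, (p i).end_mem_verts_toSubgraph, by simp⟩
  · simp only [Subgraph.verts_iSup, Subgraph.verts_sup, subgraphOfAdj_verts, Walk.verts_toSubgraph]
    exact Set.finite_iUnion fun i ↦ (p i).support.finite_toSet.union (Set.toFinite _)
  · simp only [Subgraph.verts_iSup, Subgraph.verts_sup, subgraphOfAdj_verts, Set.iUnion_subset_iff]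
    intro i
    refine Set.union_subset ((hp_verts i).trans Set.subset_union_left) ?_
    exact Set.insert_subset (.inl (ha i)) (Set.singleton_subset_iff.2 (.inr ⟨i, rfl⟩))
  · intro i
    simp only [Subgraph.verts_iSup, Set.mem_iUnion]
    exact ⟨i, .inr (by simp)⟩
  · intro i x hx
    obtain ⟨j, hx | hx⟩ := Subgraph.iSup_adj.1 hx
    · exact absurd (hp_verts j hx.fst_mem) (hb i)
    · simp only [subgraphOfAdj_adj, Sym2.eq_iff] at hx
      obtain ⟨h, -⟩ | ⟨rfl, h⟩ := hx
      · exact absurd (h ▸ ha j) (hb i)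
      · rw [hb_inj h]

theorem IsAcyclic.exists_two_lt_eDeg_of_exits [Finite ι] (hS : S.IsAcyclic)
    (hX : (S.induce X).Preconnected) (ha : ∀ i, a i ∈ X) (hb : ∀ i, b i ∉ X)
    (hb_inj : Function.Injective b) (hab : ∀ i, S.Adj (a i) (b i)) (hι : 2 < ENat.card ι) :
    ∃ w ∈ X, 2 < eDeg S w := by
  have : Nonempty ι := (ENat.card_ne_zero_iff_nonempty ι).1 (ne_bot_of_gt hι)
  obtain ⟨H, hconn, hfin, hverts, hbH, hexit⟩ :=
    exists_finite_connected_subgraph_of_exits hX ha hb hb_inj hab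
  have : Finite H.verts := hfin
  have htree : H.coe.IsTree := ⟨hconn.coe, hS.comap H.hom Subgraph.hom_injective⟩
  let b' : ι → H.verts := fun i ↦ ⟨b i, hbH i⟩
  have hleaf : ∀ i, eDeg H.coe (b' i) ≤ 1 := fun i ↦ Set.encard_le_one_iff.2
    fun x y hx hy ↦ Subtype.ext <| (hexit i x hx).trans (hexit i y hy).symm
  by_contra! hdeg
  have hdegH : ∀ x : H.verts, eDeg H.coe x ≤ 2 := by
    rintro ⟨x, hx⟩
    obtain hxX | ⟨i, rfl⟩ := hverts hx
    · exact (H.eDeg_coe_le _).trans (hdeg x hxX)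
    · exact (hleaf i).trans one_le_two
  have hleaves := htree.encard_le_two_of_eDeg_le_one hdegH (L := Set.range b')
    (by rintro _ ⟨i, rfl⟩; exact hleaf i)
  have hb'_inj : Function.Injective b' := fun i j h ↦ hb_inj (congrArg Subtype.val h)
  exact hι.not_ge (hb'_inj.encard_range.trans hleaves)

end Exits

end SimpleGraph

theorem stmt1_general {V W : Type*} (T : SimpleGraph V) (S : SimpleGraph W)
    (hS : S.IsTree) (μ : V → Set W) (hμ : IsModel T S μ)
    (v : V) (hv : 2 < eDeg T v) : ∃ w ∈ μ v, 2 < eDeg S w := by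
  obtain ⟨N, hN, hN3⟩ := Set.exists_subset_encard_eq (Order.add_one_le_of_lt hv)
  have : Finite N := Set.finite_of_encard_eq_coe hN3
  choose a ha b hb hab using fun u : N ↦ hμ.edge v u (hN u.2)
  refine hS.isAcyclic.exists_two_lt_eDeg_of_exits (hμ.connected v).preconnected ha
    (fun u hu ↦ T.ne_of_adj (hN u.2) (hμ.eq_of_mem hu (hb u))) (fun u u' h ↦ ?_) hab ?_
  · exact Subtype.ext (hμ.eq_of_mem (hb u) (h ▸ hb u'))
  · change 2 < N.encard
    rw [hN3]
    norm_num

/-- If `μ` is a model of the tree `T` in the tree `S` and `v` has degree `> 2`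
in `T`, then the branch set `μ v` contains a vertex of `S` of degree `> 2`. -/
theorem stmt1 {V W : Type*} (T : SimpleGraph V) (S : SimpleGraph W)
    (hT : T.IsTree) (hS : S.IsTree) (μ : V → Set W) (hμ : IsModel T S μ)
    (v : V) (hv : 2 < eDeg T v) : ∃ w ∈ μ v, 2 < eDeg S w :=
  stmt1_general T S hS μ hμ v hv
end

section
/- Let T, S be locally finite small trees with models μ : V(T) → {connected subgraphs of S} witnessing T ≤* S and ν witnessing S ≤* T. Then for every vertex v of T with deg(v) > 2, the branch set μ(v) contains exactly one vertex of S of degree greater than 2. -/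
open SimpleGraph

/-!
Three edges leave the branch set of a vertex of degree greater than two towards three disjoint
branch sets, so this connected set contains a vertex of degree greater than two. Branch sets
being disjoint, a model of `T` in `S` therefore injects the set `F(T)` of vertices of degree
greater than two into `F(S)`, and missing one vertex of `F(S)` if some branch set contains two of
them. Both sets are finite: in a small locally finite tree with infinitely many such vertices,
always stepping towards the branch holding infinitely many of them yields a ray that is never
bare. So the models in both directions give `|F(T)| ≤ |F(S)| ≤ |F(T)|`, leaving no room for a
second vertex.
-/
theorem Set.Infinite.exists_infinite_inter_of_subset_biUnion {ι α : Type*} {B : Set α}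
    {I : Set ι} {s : ι → Set α} (hB : B.Infinite) (hI : I.Finite) (h : B ⊆ ⋃ i ∈ I, s i) :
    ∃ i ∈ I, (B ∩ s i).Infinite := by
  by_contra! hfin
  refine hB ((hI.biUnion hfin).subset fun x hx => ?_)
  obtain ⟨i, hi, hxi⟩ := Set.mem_iUnion₂.mp (h hx)
  exact Set.mem_iUnion₂.mpr ⟨i, hi, hx, hxi⟩

theorem exists_seq_of_forall_exists {α : Type*} {P : α → Prop} {r : α → α → Prop} {a : α}
    (ha : P a) (h : ∀ a, P a → ∃ b, P b ∧ r a b) :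
    ∃ x : ℕ → α, ∀ n, P (x n) ∧ r (x n) (x (n + 1)) := by
  choose g hg using fun a : {a // P a} => h a.1 a.2
  let step : {a // P a} → {a // P a} := fun a => ⟨g a, (hg a).1⟩
  refine ⟨fun n => (step^[n] ⟨a, ha⟩).1, fun n => ⟨(step^[n] _).2, ?_⟩⟩
  show r (step^[n] _).1 (step^[n + 1] _).1
  rw [Function.iterate_succ_apply']
  exact (hg _).2

open Function in
theorem Set.ncard_le_ncard_of_pairwise_disjoint {ι α : Type*} {μ : ι → Set α} {A : Set ι}
    {B : Set α} (hB : B.Finite) (hμ : Pairwise (Disjoint on μ))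
    (hA : ∀ i ∈ A, (μ i ∩ B).Nonempty) : A.ncard ≤ B.ncard := by
  obtain rfl | ⟨i, hi⟩ := A.eq_empty_or_nonempty
  · simp
  have : Nonempty α := ⟨(hA i hi).some⟩
  choose! g hg using hA
  exact Set.ncard_le_ncard_of_injOn g (fun i hi => (hg i hi).2) (fun i hi j hj hij => by_contra
    fun hne => (hμ hne).ne_of_mem (hg i hi).1 (hij ▸ (hg j hj).1) rfl) hB

section Degree
variable {V : Type*} {G : SimpleGraph V} {v : V}

theorem two_lt_eDeg_of_adj {x y z : V} (hxy : x ≠ y) (hxz : x ≠ z) (hyz : y ≠ z)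
    (hx : G.Adj v x) (hy : G.Adj v y) (hz : G.Adj v z) : 2 < eDeg G v :=
  calc (2 : ℕ∞) < 3 := by norm_num
    _ = ({x, y, z} : Set V).encard := (Set.encard_eq_three.mpr ⟨x, y, z, hxy, hxz, hyz, rfl⟩).symm
    _ ≤ eDeg G v := Set.encard_le_encard (by rintro _ (rfl | rfl | rfl) <;> assumption)

theorem exists_adj_of_two_lt_eDeg (h : 2 < eDeg G v) :
    ∃ x y z, x ≠ y ∧ x ≠ z ∧ y ≠ z ∧ G.Adj v x ∧ G.Adj v y ∧ G.Adj v z := by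
  obtain ⟨t, hts, ht⟩ := Set.exists_subset_encard_eq (Order.add_one_le_of_lt h)
  obtain ⟨x, y, z, hxy, hxz, hyz, rfl⟩ := Set.encard_eq_three.mp ht
  exact ⟨x, y, z, hxy, hxz, hyz, hts (by simp), hts (by simp), hts (by simp)⟩

theorem eq_or_eq_of_eDeg_eq_two (h : eDeg G v = 2) {x y z : V} (hxy : x ≠ y)
    (hx : G.Adj v x) (hy : G.Adj v y) (hz : G.Adj v z) : z = x ∨ z = y := by
  have hpair : {x, y} = G.neighborSet v :=
    (Set.toFinite _).eq_of_subset_of_encard_le (by rintro _ (rfl | rfl) <;> assumption)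
      (by rw [← eDeg, h, Set.encard_pair hxy])
  have hz' : z ∈ G.neighborSet v := hz
  rw [← hpair] at hz'
  simpa using hz'

end Degree

namespace SimpleGraph
variable {V : Type*} {G : SimpleGraph V}

theorem Walk.IsPath.exists_adj_adj_of_mem_support {a b m : V} {p : G.Walk a b} (hp : p.IsPath)
    (hm : m ∈ p.support) (hma : m ≠ a) (hmb : m ≠ b) :
    ∃ c ∈ p.support, ∃ d ∈ p.support, c ≠ d ∧ G.Adj m c ∧ G.Adj m d := by
  obtain ⟨i, rfl, hi⟩ := Walk.mem_support_iff_exists_getVert.mp hm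
  have hi0 : i ≠ 0 := by rintro rfl; exact hma (p.getVert_zero)
  have hil : i ≠ p.length := by rintro rfl; exact hmb p.getVert_length
  obtain ⟨j, rfl⟩ : ∃ j, i = j + 1 := ⟨i - 1, by omega⟩
  refine ⟨p.getVert j, p.getVert_mem_support j, p.getVert (j + 2), p.getVert_mem_support _,
    fun h => ?_, (p.adj_getVert_succ (by omega)).symm, p.adj_getVert_succ (by omega)⟩
  have := hp.getVert_injOn (by simp; omega) (by simp; omega) h
  omega

theorem exists_isPath_support_subset {A : Set V} (hA : (G.induce A).Connected) {a b : V}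
    (ha : a ∈ A) (hb : b ∈ A) : ∃ p : G.Walk a b, p.IsPath ∧ ∀ x ∈ p.support, x ∈ A := by
  classical
  obtain ⟨q⟩ := hA.preconnected ⟨a, ha⟩ ⟨b, hb⟩
  refine ⟨q.bypass.map (Embedding.induce A).toHom,
    q.bypass_isPath.map Subtype.val_injective, fun x hx => ?_⟩
  obtain ⟨y, -, rfl⟩ := List.mem_map.mp ((Walk.support_map _ _) ▸ hx)
  exact y.2

theorem exists_two_lt_eDeg_of_three_exits {A : Set V} (hA : (G.induce A).Connected)
    {a₁ a₂ a₃ b₁ b₂ b₃ : V} (ha₁ : a₁ ∈ A) (ha₂ : a₂ ∈ A) (ha₃ : a₃ ∈ A)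
    (hb₁ : b₁ ∉ A) (hb₂ : b₂ ∉ A) (hb₃ : b₃ ∉ A) (h₁₂ : b₁ ≠ b₂) (h₁₃ : b₁ ≠ b₃) (h₂₃ : b₂ ≠ b₃)
    (e₁ : G.Adj a₁ b₁) (e₂ : G.Adj a₂ b₂) (e₃ : G.Adj a₃ b₃) : ∃ w ∈ A, 2 < eDeg G w := by
  obtain ⟨q, hq, hqA⟩ := exists_isPath_support_subset hA ha₁ ha₂
  let L : G.Walk b₁ b₂ := .cons e₁.symm (q.concat e₂)
  have hLA : ∀ x ∈ L.support, x = b₁ ∨ x = b₂ ∨ x ∈ A := by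
    intro x hx
    simp only [L, Walk.support_cons, Walk.support_concat, List.mem_cons, List.mem_append,
      List.mem_nil_iff, or_false] at hx
    rcases hx with h | h | h
    exacts [Or.inl h, Or.inr (Or.inr (hqA x h)), Or.inr (Or.inl h)]
  have hL : L.IsPath := by
    refine (hq.concat (fun h => hb₂ (hqA _ h)) e₂).cons ?_
    simp only [Walk.support_concat, List.mem_append, List.mem_singleton, not_or]
    exact ⟨fun h => hb₁ (hqA _ h), h₁₂⟩
  obtain ⟨r, -, hrA⟩ := exists_isPath_support_subset hA ha₃ ha₁
  have hb₃L : b₃ ∉ L.support := fun h => by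
    rcases hLA _ h with h | h | h
    exacts [h₁₃ h.symm, h₂₃ h.symm, hb₃ h]
  -- the walk from `b₃` into `A` first meets `L` at an inner vertex `m`, adjacent to the vertex
  -- `n` off `L` just before it and to its two neighbours on `L`
  obtain ⟨⟨⟨n, m⟩, hnm⟩, hd, hn, hm⟩ := (Walk.cons e₃.symm r).exists_boundary_dart
    {x | x ∉ L.support} hb₃L (by simp [L])
  simp only [Set.mem_ofPred_eq, not_not] at hn hm
  have hmA : m ∈ A := by
    have := Walk.dart_snd_mem_support_of_mem_darts _ hd
    rw [Walk.support_cons, List.mem_cons] at this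
    exact this.elim (fun h => absurd (h ▸ hm) hb₃L) (hrA m)
  obtain ⟨c, hc, c', hc', hcc', hmc, hmc'⟩ := hL.exists_adj_adj_of_mem_support hm
    (fun h => hb₁ (h ▸ hmA)) (fun h => hb₂ (h ▸ hmA))
  exact ⟨m, hmA, two_lt_eDeg_of_adj hcc' (fun h : c = n => hn (h ▸ hc))
    (fun h : c' = n => hn (h ▸ hc')) hmc hmc' hnm.symm⟩

variable {T : SimpleGraph V} {u w : V}

/-- For a tree and `u ~ w`, the branch of `T` at `u` containing `w`. -/
def side (T : SimpleGraph V) (u w : V) : Set V :=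
  {v | ∃ p : T.Walk w v, p.IsPath ∧ u ∉ p.support}

theorem mem_side_self (huw : u ≠ w) : w ∈ T.side u w :=
  ⟨.nil, .nil, by simpa using huw⟩

theorem notMem_side_self : u ∉ T.side u w :=
  fun ⟨p, _, hu⟩ => hu p.end_mem_support

theorem exists_adj_mem_side (hT : T.Connected) {v : V} (hv : v ≠ u) :
    ∃ w, T.Adj u w ∧ v ∈ T.side u w := by
  obtain ⟨p, hp⟩ := (hT u v).exists_isPath
  cases p with
  | nil => exact absurd rfl hv
  | cons h q =>
    rw [Walk.cons_isPath_iff] at hp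
    exact ⟨_, h, q, hp⟩

theorem exists_adj_mem_side_of_mem_side {v : V} (hv : v ∈ T.side u w) (hvw : v ≠ w) :
    ∃ w', T.Adj w w' ∧ w' ≠ u ∧ v ∈ T.side w w' := by
  obtain ⟨p, hp, hu⟩ := hv
  cases p with
  | nil => exact absurd rfl hvw
  | cons h q =>
    rw [Walk.cons_isPath_iff] at hp
    exact ⟨_, h, fun h' => hu (by simp [← h']), q, hp⟩

theorem side_subset_side (hT : T.IsAcyclic) {w' : V} (huw : T.Adj u w) (hww' : T.Adj w w')
    (hw'u : w' ≠ u) : T.side w w' ⊆ T.side u w := by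
  classical
  rintro v ⟨q, hq, hwq⟩
  refine ⟨.cons hww' q, hq.cons hwq, ?_⟩
  rw [Walk.support_cons, List.mem_cons, not_or]
  refine ⟨huw.ne, fun huq => ?_⟩
  -- otherwise `w' ⋯ u` along `q` and `w' - w - u` would be two different paths
  have h₂ : (Walk.cons hww'.symm (.cons huw.symm .nil)).IsPath := by
    simp [Walk.cons_isPath_iff, huw.ne', hww'.ne', hw'u]
  have := hT.subsingleton_path w' u
  have hpath : q.takeUntil u huq = .cons hww'.symm (.cons huw.symm .nil) :=
    congrArg Subtype.val (Subsingleton.elim (α := T.Path w' u) ⟨_, hq.takeUntil huq⟩ ⟨_, h₂⟩)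
  exact hwq (q.support_takeUntil_subset_support huq (by simp [hpath]))

variable {F : Set V}

theorem exists_adj_infinite_inter_side (hlf : ∀ v, (T.neighborSet v).Finite)
    (hT : T.Connected) (hF : F.Infinite) (u : V) :
    ∃ w, T.Adj u w ∧ (F ∩ T.side u w).Infinite := by
  obtain ⟨w, hw, hinf⟩ := Set.Infinite.exists_infinite_inter_of_subset_biUnion (s := T.side u)
    (hF.sdiff (Set.finite_singleton u)) (hlf u) fun v hv => by
      obtain ⟨w, huw, hvw⟩ := exists_adj_mem_side hT (Set.notMem_singleton_iff.mp hv.2)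
      exact Set.mem_iUnion₂.mpr ⟨w, huw, hvw⟩
  exact ⟨w, hw, hinf.mono (Set.inter_subset_inter_left _ Set.sdiff_subset)⟩

theorem exists_adj_ne_infinite_inter_side (hlf : ∀ v, (T.neighborSet v).Finite)
    (hF : (F ∩ T.side u w).Infinite) : ∃ w', T.Adj w w' ∧ w' ≠ u ∧ (F ∩ T.side w w').Infinite := by
  obtain ⟨w', ⟨hww', hw'u⟩, hinf⟩ := Set.Infinite.exists_infinite_inter_of_subset_biUnion
    (s := T.side w) (hF.sdiff (Set.finite_singleton w)) ((hlf w).sdiff (t := {u})) fun v hv => by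
      obtain ⟨w', hww', hw'u, hvw'⟩ :=
        exists_adj_mem_side_of_mem_side hv.1.2 (Set.notMem_singleton_iff.mp hv.2)
      exact Set.mem_iUnion₂.mpr ⟨w', ⟨hww', hw'u⟩, hvw'⟩
  exact ⟨w', hww', hw'u, hinf.mono (Set.inter_subset_inter_left _
    (Set.sdiff_subset.trans Set.inter_subset_left))⟩

theorem isRay_of_adj_of_ne (hT : T.IsAcyclic) {f : ℕ → V} (hadj : ∀ n, T.Adj (f n) (f (n + 1)))
    (hback : ∀ n, f (n + 2) ≠ f n) : IsRay T f := by
  have hside : ∀ k m, f (m + k + 1) ∈ T.side (f m) (f (m + 1)) := by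
    intro k
    induction k with
    | zero => exact fun m => mem_side_self (hadj m).ne
    | succ k ih =>
      intro m
      have := ih (m + 1)
      rw [show m + 1 + k + 1 = m + (k + 1) + 1 by omega] at this
      exact side_subset_side hT (hadj m) (hadj (m + 1)) (hback m) this
  refine ⟨Function.Injective.of_lt_imp_ne fun m n hmn hfmn => ?_, hadj⟩
  obtain ⟨k, rfl⟩ : ∃ k, n = m + k + 1 := ⟨n - m - 1, by omega⟩
  exact notMem_side_self (hfmn ▸ hside k m)

theorem Walk.mem_of_forall_adj_mem {R : Set V} (hR : ∀ x ∈ R, ∀ y, T.Adj x y → y = u ∨ y ∈ R) :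
    ∀ {a b : V} (p : T.Walk a b), a ∈ R → u ∉ p.support → b ∈ R
  | _, _, .nil, ha, _ => ha
  | _, _, .cons h q, ha, hu => by
    rw [Walk.support_cons, List.mem_cons, not_or] at hu
    refine Walk.mem_of_forall_adj_mem hR q ((hR _ ha _ h).resolve_left ?_) hu.2
    rintro rfl
    exact hu.2 q.start_mem_support

theorem side_subset_of_eDeg_eq_two {f : ℕ → V} (hf : IsRay T f) {M : ℕ}
    (hM : ∀ n ≥ M, eDeg T (f n) = 2) : T.side (f M) (f (M + 1)) ⊆ f '' Set.Ioi M := by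
  rintro v ⟨p, -, hp⟩
  refine Walk.mem_of_forall_adj_mem ?_ p ⟨M + 1, by simp, rfl⟩ hp
  rintro _ ⟨n, hn, rfl⟩ y hy
  rw [Set.mem_Ioi] at hn
  obtain ⟨k, rfl⟩ : ∃ k, n = k + 1 := ⟨n - 1, by omega⟩
  rcases eq_or_eq_of_eDeg_eq_two (hM _ (by omega)) (hf.1.ne (show k ≠ k + 2 by omega))
    (hf.2 k).symm (hf.2 (k + 1)) hy with rfl | rfl
  · rcases (show k = M ∨ M < k by omega) with rfl | hk
    exacts [Or.inl rfl, Or.inr ⟨k, hk, rfl⟩]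
  · exact Or.inr ⟨k + 2, Set.mem_Ioi.mpr (by omega), rfl⟩

end SimpleGraph

section Models
variable {V W : Type*} {T : SimpleGraph V} {S : SimpleGraph W} {μ : V → Set W}

theorem IsModel.exists_two_lt_eDeg (hμ : IsModel T S μ) {v : V} (hv : 2 < eDeg T v) :
    ∃ w ∈ μ v, 2 < eDeg S w := by
  obtain ⟨x₁, x₂, x₃, h₁₂, h₁₃, h₂₃, hx₁, hx₂, hx₃⟩ := exists_adj_of_two_lt_eDeg hv
  obtain ⟨a₁, ha₁, b₁, hb₁, e₁⟩ := hμ.edge v x₁ hx₁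
  obtain ⟨a₂, ha₂, b₂, hb₂, e₂⟩ := hμ.edge v x₂ hx₂
  obtain ⟨a₃, ha₃, b₃, hb₃, e₃⟩ := hμ.edge v x₃ hx₃
  have hout : ∀ {x b}, T.Adj v x → b ∈ μ x → b ∉ μ v := fun hx hb =>
    (hμ.disjoint _ _ hx.ne').notMem_of_mem_left hb
  have hne : ∀ {x y b c}, x ≠ y → b ∈ μ x → c ∈ μ y → b ≠ c := fun hxy hb hc =>
    (hμ.disjoint _ _ hxy).ne_of_mem hb hc
  exact exists_two_lt_eDeg_of_three_exits (hμ.connected v) ha₁ ha₂ ha₃ (hout hx₁ hb₁)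
    (hout hx₂ hb₂) (hout hx₃ hb₃) (hne h₁₂ hb₁ hb₂) (hne h₁₃ hb₁ hb₃) (hne h₂₃ hb₂ hb₃) e₁ e₂ e₃

theorem IsSmall.finite_setOf_two_lt_eDeg (hs : IsSmall T) (hT : T.IsTree)
    (hlf : ∀ v, (T.neighborSet v).Finite) : {v | 2 < eDeg T v}.Finite := by
  by_contra hinf
  obtain ⟨u₀, -⟩ := Set.Infinite.nonempty hinf
  obtain ⟨w₀, h₀⟩ := exists_adj_infinite_inter_side hlf hT.connected hinf u₀
  -- a non-backtracking walk along directed edges `(u, w)` whose sides contain infinitely many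
  -- vertices of degree greater than two
  obtain ⟨e, he⟩ := exists_seq_of_forall_exists (a := (u₀, w₀))
    (P := fun e : V × V => T.Adj e.1 e.2 ∧ ({v | 2 < eDeg T v} ∩ T.side e.1 e.2).Infinite)
    (r := fun e e' => e'.1 = e.2 ∧ e'.2 ≠ e.1) h₀ fun e ⟨_, he⟩ => by
      obtain ⟨w', hww', hw'u, hinf'⟩ := exists_adj_ne_infinite_inter_side hlf he
      exact ⟨(e.2, w'), ⟨hww', hinf'⟩, rfl, hw'u⟩
  set f : ℕ → V := fun n => (e n).1
  have hsnd : ∀ n, (e n).2 = f (n + 1) := fun n => ((he n).2.1).symm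
  have hadj : ∀ n, T.Adj (f n) (f (n + 1)) := fun n => hsnd n ▸ (he n).1.1
  have hf := isRay_of_adj_of_ne hT.isAcyclic hadj fun n => hsnd (n + 1) ▸ (he n).2.2
  obtain ⟨M, hM⟩ := hs f hf
  obtain ⟨v, hv, hvM⟩ := ((he M).1.2).nonempty
  obtain ⟨n, hn, rfl⟩ := side_subset_of_eDeg_eq_two hf hM (hsnd M ▸ hvM)
  exact (hM n (Set.mem_Ioi.mp hn).le ▸ hv : (2 : ℕ∞) < 2).false

theorem IsModel.ncard_le_ncard (hμ : IsModel T S μ) (hS : {w | 2 < eDeg S w}.Finite) :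
    {v | 2 < eDeg T v}.ncard ≤ {w | 2 < eDeg S w}.ncard :=
  Set.ncard_le_ncard_of_pairwise_disjoint hS hμ.disjoint fun _ hv => hμ.exists_two_lt_eDeg hv

theorem IsModel.ncard_lt_ncard (hμ : IsModel T S μ) (hS : {w | 2 < eDeg S w}.Finite) {v : V}
    {w₁ w₂ : W} (hne : w₁ ≠ w₂) (hw₁ : w₁ ∈ μ v ∧ 2 < eDeg S w₁) (hw₂ : w₂ ∈ μ v ∧ 2 < eDeg S w₂) :
    {v | 2 < eDeg T v}.ncard < {w | 2 < eDeg S w}.ncard := by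
  refine lt_of_le_of_lt ?_ (Set.ncard_sdiff_singleton_lt_of_mem hw₁.2 hS)
  refine Set.ncard_le_ncard_of_pairwise_disjoint (hS.sdiff) hμ.disjoint fun x hx => ?_
  by_cases hxv : x = v
  · exact ⟨w₂, hxv ▸ hw₂.1, hw₂.2, hne.symm⟩
  · obtain ⟨w, hw, hw'⟩ := hμ.exists_two_lt_eDeg hx
    exact ⟨w, hw, hw', fun h => (hμ.disjoint x v hxv).ne_of_mem hw hw₁.1 h⟩

end Models

/-- For locally finite small trees `T, S` with models in both directions,
the branch set of every vertex of degree `> 2` contains exactly one vertex of `S` of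
degree `> 2`. -/
theorem stmt18 {V W : Type*} (T : SimpleGraph V) (S : SimpleGraph W)
    (hT : T.IsTree) (hS : S.IsTree)
    (hlfT : ∀ v, (T.neighborSet v).Finite) (hlfS : ∀ w, (S.neighborSet w).Finite)
    (hsT : IsSmall T) (hsS : IsSmall S)
    (μ : V → Set W) (hμ : IsModel T S μ)
    (ν : W → Set V) (hν : IsModel S T ν) :
    ∀ v, 2 < eDeg T v → ∃! w, w ∈ μ v ∧ 2 < eDeg S w := by
  intro v hv
  obtain ⟨w₁, hw₁⟩ := hμ.exists_two_lt_eDeg hv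
  refine ⟨w₁, hw₁, fun w₂ hw₂ => by_contra fun hne => ?_⟩
  have hlt := hμ.ncard_lt_ncard (hsS.finite_setOf_two_lt_eDeg hS hlfS) (Ne.symm hne) hw₁ hw₂
  have hle := hν.ncard_le_ncard (hsT.finite_setOf_two_lt_eDeg hT hlfT)
  omega
end
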